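/- For positive definite matrices V, one has I_M(A:B)_V = I_M(A:B)_{V^{-1}}: the log-determinant mutual information of a bipartite positive definite matrix equals that of its inverse. -/

import Mathlib

/-!
By the Schur complement formulas, the `A`-block of `V⁻¹` is the inverse of the Schur complement
`V / V_B`, whose determinant is `det V / det V_B`; hence `det (V⁻¹)_A = det V_B / det V`, and
symmetrically for `B`. Substituting these and `det V⁻¹ = (det V)⁻¹` into the definition of `IM V⁻¹`
returns exactly the argument of the logarithm in `IM V`.
-/

open Matrix

/-- The log-determinant mutual information of a bipartite positive matrix. -/
noncomputable def IM {α β : Type*} [Fintype α] [Fintype β] [DecidableEq α] [DecidableEq β]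
    (W : Matrix (α ⊕ β) (α ⊕ β) ℝ) : ℝ :=
  (1/2) * Real.logb 2 ((W.toBlocks₁₁.det * W.toBlocks₂₂.det) / W.det)

namespace Matrix

section PosDef

variable {m n R : Type*} [Ring R] [PartialOrder R] [StarRing R]
  {M : Matrix (m ⊕ n) (m ⊕ n) R}

theorem PosDef.toBlocks₁₁ (hM : M.PosDef) : M.toBlocks₁₁.PosDef :=
  hM.submatrix Sum.inl_injective

theorem PosDef.toBlocks₂₂ (hM : M.PosDef) : M.toBlocks₂₂.PosDef :=
  hM.submatrix Sum.inr_injective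

end PosDef

variable {m n K : Type*} [Fintype m] [Fintype n] [DecidableEq m] [DecidableEq n] [Field K]

theorem det_toBlocks₁₁_inv (M : Matrix (m ⊕ n) (m ⊕ n) K) (hM : IsUnit M.det)
    (hD : IsUnit M.toBlocks₂₂.det) :
    M⁻¹.toBlocks₁₁.det = M.toBlocks₂₂.det / M.det := by
  let := invertibleOfIsUnitDet _ hD
  let := invertibleOfIsUnitDet _ (M.fromBlocks_toBlocks.symm ▸ hM)
  let := invertibleOfFromBlocks₂₂Invertible M.toBlocks₁₁ M.toBlocks₁₂ M.toBlocks₂₁ M.toBlocks₂₂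
  have hinv : M⁻¹.toBlocks₁₁ = ⅟(M.toBlocks₁₁ - M.toBlocks₁₂ * ⅟M.toBlocks₂₂ * M.toBlocks₂₁) := by
    conv_lhs => rw [← M.fromBlocks_toBlocks, ← invOf_eq_nonsing_inv, invOf_fromBlocks₂₂_eq]
    rfl
  have hdet : M.det = M.toBlocks₂₂.det *
      (M.toBlocks₁₁ - M.toBlocks₁₂ * ⅟M.toBlocks₂₂ * M.toBlocks₂₁).det := by
    conv_lhs => rw [← M.fromBlocks_toBlocks]
    exact det_fromBlocks₂₂ ..
  rw [hinv, invOf_eq_nonsing_inv, det_nonsing_inv, Ring.inverse_eq_inv', hdet,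
    div_mul_cancel_left₀ hD.ne_zero]

theorem det_toBlocks₂₂_inv (M : Matrix (m ⊕ n) (m ⊕ n) K) (hM : IsUnit M.det)
    (hA : IsUnit M.toBlocks₁₁.det) :
    M⁻¹.toBlocks₂₂.det = M.toBlocks₁₁.det / M.det := by
  have hswap := det_toBlocks₁₁_inv (M.submatrix (Equiv.sumComm n m) (Equiv.sumComm n m))
    (by rwa [det_submatrix_equiv_self]) hA
  rwa [inv_submatrix_equiv, det_submatrix_equiv_self] at hswap

end Matrix

/-- The log-determinant mutual information of a bipartite positive definite matrix equals
that of its inverse: `I_M(A:B)_V = I_M(A:B)_{V⁻¹}`. -/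
theorem IM_inv {α β : Type*} [Fintype α] [Fintype β] [DecidableEq α] [DecidableEq β]
    (V : Matrix (α ⊕ β) (α ⊕ β) ℝ) (hV : V.PosDef) :
    IM V = IM V⁻¹ := by
  have hA := hV.toBlocks₁₁.det_pos.ne'.isUnit
  have hD := hV.toBlocks₂₂.det_pos.ne'.isUnit
  have hdet := hV.det_pos.ne'
  rw [IM, IM, det_toBlocks₁₁_inv V hdet.isUnit hD, det_toBlocks₂₂_inv V hdet.isUnit hA,
    det_nonsing_inv, Ring.inverse_eq_inv']
  congr 2
  field_simp
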